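/- Let K be a field, let k ≥ 1 and n, m, l ≥ 0 be natural numbers, and let u, v (each indexed 0,…,n), w, x (each indexed 0,…,m), and y, z (each indexed 0,…,l) be families of elements of K. Then the k × (2(n+k)+2(m+k)+2(l+k)) block matrix f = [H'(v) | −H'(u) | H'(x) | −H'(w) | H'(z) | −H'(y)] has rank k if and only if not all of the elements of u, v, w, x, y, z are zero (and f = 0 when they are all zero). -/

import Mathlib

/-!
A single nonzero block already has full row rank `k`: if `d` is the least index with
`u d ≠ 0`, the columns `n + k - 1 - d - i` (`i < k`) of `H'(u)` form an upper triangular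
minor with constant diagonal `u d`. Appending columns cannot lower the rank, and the rank
never exceeds the number `k` of rows, so `f` has rank `k` as soon as one family is nonzero.
-/

/-- The wide Hankel band matrix `H'(u)`: the `k × (n+k)` matrix with
`H'(u)[i,j] = u (n+k-1-i-j)` when `k-1 ≤ i+j ≤ n+k-1` and `0` otherwise. -/
def Hw {K : Type*} [Field K] (k n : ℕ) (u : Fin (n + 1) → K) :
    Matrix (Fin k) (Fin (n + k)) K :=
  Matrix.of fun i j =>
    if h : k - 1 ≤ (i : ℕ) + (j : ℕ) ∧ (i : ℕ) + (j : ℕ) ≤ n + k - 1 then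
      u ⟨n + k - 1 - (i : ℕ) - (j : ℕ), by omega⟩
    else 0

namespace Matrix

variable {R : Type*} [CommSemiring R] [StrongRankCondition R] {m n₁ n₂ : Type*}
  [Fintype n₁] [Fintype n₂]

theorem rank_le_rank_fromCols_left (A : Matrix m n₁ R) (B : Matrix m n₂ R) :
    A.rank ≤ (fromCols A B).rank :=
  rank_submatrix_le (fromCols A B) id Sum.inl

theorem rank_le_rank_fromCols_right (A : Matrix m n₁ R) (B : Matrix m n₂ R) :
    B.rank ≤ (fromCols A B).rank :=
  rank_submatrix_le (fromCols A B) id Sum.inr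

theorem rank_lt_of_rank_fromCols_lt {A : Matrix m n₁ R} {B : Matrix m n₂ R} {c : ℕ}
    (h : (fromCols A B).rank < c) : A.rank < c ∧ B.rank < c :=
  ⟨(rank_le_rank_fromCols_left A B).trans_lt h, (rank_le_rank_fromCols_right A B).trans_lt h⟩

end Matrix

section Hankel

variable {K : Type*} [Field K] {k n : ℕ}

@[simp]
theorem Hw_zero : Hw k n (0 : Fin (n + 1) → K) = 0 := by
  ext i j
  simp only [Hw, Matrix.of_apply, Matrix.zero_apply]
  split <;> rfl

theorem Hw_neg (u : Fin (n + 1) → K) : Hw k n (-u) = -Hw k n u := by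
  ext i j
  simp only [Hw, Matrix.of_apply, Matrix.neg_apply]
  split <;> simp

theorem det_Hw_submatrix {u : Fin (n + 1) → K} {d : Fin (n + 1)} (hd : ∀ e < d, u e = 0) :
    ((Hw k n u).submatrix id fun i : Fin k => ⟨n + k - 1 - d - i, by omega⟩).det = u d ^ k := by
  replace hd : ∀ e (he : e < (d : ℕ)), u ⟨e, by omega⟩ = 0 := fun e he => hd _ he
  have triangular : ((Hw k n u).submatrix id fun i : Fin k =>
      (⟨n + k - 1 - d - i, by omega⟩ : Fin (n + k))).IsUpperTriangular := by
    intro i j (hji : (j : ℕ) < i)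
    simp only [Matrix.submatrix_apply, id_eq, Hw, Matrix.of_apply]
    split_ifs
    · exact hd _ (by omega)
    · rfl
  have diagonal (i : Fin k) : Hw k n u i ⟨n + k - 1 - d - i, by omega⟩ = u d := by
    simp only [Hw, Matrix.of_apply]
    rw [dif_pos (by omega)]
    congr 1
    ext
    simp only
    omega
  rw [Matrix.det_of_isUpperTriangular triangular]
  simp only [Matrix.submatrix_apply, id_eq, diagonal, Finset.prod_const, Finset.card_univ,
    Fintype.card_fin]

theorem rank_Hw {u : Fin (n + 1) → K} (hu : u ≠ 0) : (Hw k n u).rank = k := by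
  obtain ⟨d, hud, hd⟩ := WellFounded.has_min wellFounded_lt {e | u e ≠ 0} (Function.ne_iff.mp hu)
  have hmin : ∀ e < d, u e = 0 := fun e he => not_not.mp fun hue => hd e hue he
  refine le_antisymm (Matrix.rank_le_height _) ?_
  calc k = ((Hw k n u).submatrix id fun i : Fin k => ⟨n + k - 1 - d - i, by omega⟩).rank := by
        rw [Matrix.rank_of_det_ne_zero (by rw [det_Hw_submatrix hmin]; exact pow_ne_zero _ hud),
          Fintype.card_fin]
    _ ≤ (Hw k n u).rank := Matrix.rank_submatrix_le _ _ _

theorem eq_zero_of_rank_Hw_lt {u : Fin (n + 1) → K} (h : (Hw k n u).rank < k) : u = 0 :=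
  not_not.mp fun hu => h.ne (rank_Hw hu)

theorem eq_zero_of_rank_neg_Hw_lt {u : Fin (n + 1) → K} (h : (-Hw k n u).rank < k) : u = 0 :=
  neg_eq_zero.mp (eq_zero_of_rank_Hw_lt (by rwa [Hw_neg]))

end Hankel

/-- The block matrix `f = [H'(v) | -H'(u) | H'(x) | -H'(w) | H'(z) | -H'(y)]`
has rank `k` if and only if not all of `u, v, w, x, y, z` vanish; and `f = 0`
when they all vanish. -/
theorem stmt8 {K : Type*} [Field K] (k n m l : ℕ) (hk : 1 ≤ k)
    (u v : Fin (n + 1) → K) (w x : Fin (m + 1) → K) (y z : Fin (l + 1) → K) :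
    ((Matrix.fromCols (Matrix.fromCols (Hw k n v) (-(Hw k n u)))
          (Matrix.fromCols (Matrix.fromCols (Hw k m x) (-(Hw k m w)))
            (Matrix.fromCols (Hw k l z) (-(Hw k l y))))).rank = k ↔
        ¬(u = 0 ∧ v = 0 ∧ w = 0 ∧ x = 0 ∧ y = 0 ∧ z = 0)) ∧
      (u = 0 ∧ v = 0 ∧ w = 0 ∧ x = 0 ∧ y = 0 ∧ z = 0 →
        Matrix.fromCols (Matrix.fromCols (Hw k n v) (-(Hw k n u)))
          (Matrix.fromCols (Matrix.fromCols (Hw k m x) (-(Hw k m w)))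
            (Matrix.fromCols (Hw k l z) (-(Hw k l y)))) = 0) := by
  have hzero : u = 0 ∧ v = 0 ∧ w = 0 ∧ x = 0 ∧ y = 0 ∧ z = 0 →
      Matrix.fromCols (Matrix.fromCols (Hw k n v) (-(Hw k n u)))
        (Matrix.fromCols (Matrix.fromCols (Hw k m x) (-(Hw k m w)))
          (Matrix.fromCols (Hw k l z) (-(Hw k l y)))) = 0 := by
    rintro ⟨rfl, rfl, rfl, rfl, rfl, rfl⟩
    simp
  refine ⟨⟨fun hrank hall => ?_, fun hne => ?_⟩, hzero⟩
  · rw [hzero hall, Matrix.rank_zero] at hrank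
    omega
  · refine le_antisymm ((Matrix.rank_le_card_height _).trans_eq (Fintype.card_fin k))
      (not_lt.mp fun hlt => hne ?_)
    obtain ⟨hvu, hxwzy⟩ := Matrix.rank_lt_of_rank_fromCols_lt hlt
    obtain ⟨hv, hu⟩ := Matrix.rank_lt_of_rank_fromCols_lt hvu
    obtain ⟨hxw, hzy⟩ := Matrix.rank_lt_of_rank_fromCols_lt hxwzy
    obtain ⟨hx, hw⟩ := Matrix.rank_lt_of_rank_fromCols_lt hxw
    obtain ⟨hz, hy⟩ := Matrix.rank_lt_of_rank_fromCols_lt hzy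
    exact ⟨eq_zero_of_rank_neg_Hw_lt hu, eq_zero_of_rank_Hw_lt hv, eq_zero_of_rank_neg_Hw_lt hw,
      eq_zero_of_rank_Hw_lt hx, eq_zero_of_rank_neg_Hw_lt hy, eq_zero_of_rank_Hw_lt hz⟩
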